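/- Let ρ ∈ (0,1], κ ∈ (0,1], and let (m_{−1}, m₁, n_{−1}, n₁) ∈ ℝ⁴ satisfy m_{−1} < m₁ and n₁ < n_{−1}. Define P₊, P₋ : [0,∞)² → ℝ by P₊(a,b) = (κ a^ρ/(a^ρ+b^ρ) + (1−κ)/2) m₁ + (κ b^ρ/(a^ρ+b^ρ) + (1−κ)/2) m_{−1} − a and P₋(a,b) = (κ b^ρ/(a^ρ+b^ρ) + (1−κ)/2) n_{−1} + (κ a^ρ/(a^ρ+b^ρ) + (1−κ)/2) n₁ − b for (a,b) ≠ (0,0), and P₊(0,0) = (m₁ + m_{−1})/2, P₋(0,0) = (n_{−1} + n₁)/2. Then there is a unique pair (a,b) ∈ [0,∞)² such that P₊(a,b) = max over a' ∈ [0,∞) of P₊(a',b) and P₋(a,b) = max over b' ∈ [0,∞) of P₋(a,b'); setting M = m₁ − m_{−1} and N = n_{−1} − n₁, this pair is (a,b) = κρ · (M^{1+ρ} N^ρ/(M^ρ+N^ρ)², M^ρ N^{1+ρ}/(M^ρ+N^ρ)²), and both of its components are strictly positive. -/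

import Mathlib

/-!
Against a positive stake `b`, a player's payoff is, up to a constant,
`c x ^ ρ / (x ^ ρ + b ^ ρ) - x` with `c = κ (hi - lo)`. Its derivative is `c ρ V / x - 1`,
where `V = p (1 - p)` for the fair winning chance `p`; for `ρ ≤ 1` this is strictly decreasing
in `x`, so the best response is the unique solution of `x = κ ρ (hi - lo) V`. Against a zero
stake there is no best response (any positive stake wins, and a smaller one wins too), so an
equilibrium is interior. The two first-order conditions then give `a : b = M : N`, and since
`V` is invariant under common rescaling this pins down `a = κ ρ M V(M, N)` and
`b = κ ρ N V(M, N)`.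
-/

open Real Set

/-- `p (1 - p)` for the unbiased winning chance `p = a ^ ρ / (a ^ ρ + b ^ ρ)`. -/
noncomputable def winVariance (ρ a b : ℝ) : ℝ := a ^ ρ * b ^ ρ / (a ^ ρ + b ^ ρ) ^ 2

lemma winVariance_comm (ρ a b : ℝ) : winVariance ρ a b = winVariance ρ b a := by
  rw [winVariance, winVariance, mul_comm, add_comm]

lemma winVariance_mul {ρ a b k : ℝ} (ha : 0 ≤ a) (hb : 0 ≤ b) (hk : 0 < k) :
    winVariance ρ (k * a) (k * b) = winVariance ρ a b := by
  have hkρ : 0 < k ^ ρ := rpow_pos_of_pos hk ρ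
  simp only [winVariance, mul_rpow hk.le ha, mul_rpow hk.le hb]
  rw [← mul_add, mul_pow, mul_mul_mul_comm, ← sq, mul_div_mul_left _ _ (by positivity)]

lemma strictAntiOn_winVariance_div {ρ b : ℝ} (hρ0 : 0 < ρ) (hρ1 : ρ ≤ 1) (hb : 0 < b) :
    StrictAntiOn (fun x => winVariance ρ x b / x) (Ioi 0) := by
  have hform : ∀ x : ℝ, 0 < x →
      winVariance ρ x b / x = x ^ (ρ - 1) * b ^ ρ / (x ^ ρ + b ^ ρ) ^ 2 := by
    intro x hx
    rw [winVariance, rpow_sub_one hx.ne']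
    field_simp
  intro x (hx : 0 < x) y (hy : 0 < y) hxy
  have hbρ : 0 < b ^ ρ := rpow_pos_of_pos hb ρ
  have hxρ : 0 < x ^ ρ := rpow_pos_of_pos hx ρ
  simp only [hform x hx, hform y hy]
  calc y ^ (ρ - 1) * b ^ ρ / (y ^ ρ + b ^ ρ) ^ 2
      ≤ x ^ (ρ - 1) * b ^ ρ / (y ^ ρ + b ^ ρ) ^ 2 := by
        have := rpow_le_rpow_of_nonpos hx hxy.le (by linarith : ρ - 1 ≤ 0)
        gcongr ?_ * _ / _
    _ < x ^ (ρ - 1) * b ^ ρ / (x ^ ρ + b ^ ρ) ^ 2 := by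
        have := rpow_pos_of_pos hx (ρ - 1)
        gcongr

noncomputable def contestPayoff (c ρ b x : ℝ) : ℝ := c * x ^ ρ / (x ^ ρ + b ^ ρ) - x

section contestPayoff

variable {c ρ b x : ℝ}

lemma hasDerivAt_contestPayoff (hb : 0 < b) (hx : 0 < x) :
    HasDerivAt (contestPayoff c ρ b) (c * ρ * (winVariance ρ x b / x) - 1) x := by
  have hbρ : 0 < b ^ ρ := rpow_pos_of_pos hb ρ
  have hxρ : 0 < x ^ ρ := rpow_pos_of_pos hx ρ
  have hpow : HasDerivAt (fun y : ℝ => y ^ ρ) (ρ * x ^ (ρ - 1)) x :=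
    hasDerivAt_rpow_const (Or.inl hx.ne')
  refine (((hpow.const_mul c).div (hpow.add_const _) (by positivity)).sub
    (hasDerivAt_id x)).congr_deriv ?_
  rw [winVariance, rpow_sub_one hx.ne']
  field_simp
  ring

lemma continuousOn_contestPayoff (hρ : 0 ≤ ρ) (hb : 0 < b) :
    ContinuousOn (contestPayoff c ρ b) (Ici 0) := by
  have hpow := continuous_rpow_const hρ
  refine ((continuous_const.mul hpow).continuousOn.div
    (hpow.add continuous_const).continuousOn fun y (hy : 0 ≤ y) => ?_).sub continuousOn_id
  have := rpow_nonneg hy ρ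
  have := rpow_pos_of_pos hb ρ
  exact (by positivity : (0:ℝ) < y ^ ρ + b ^ ρ).ne'

theorem isMaxOn_contestPayoff_iff (hc : 0 < c) (hρ0 : 0 < ρ) (hρ1 : ρ ≤ 1) (hb : 0 < b)
    (hx : 0 < x) :
    IsMaxOn (contestPayoff c ρ b) (Ici 0) x ↔ x = c * ρ * winVariance ρ x b := by
  have hfoc : x = c * ρ * winVariance ρ x b ↔ c * ρ * (winVariance ρ x b / x) - 1 = 0 := by
    rw [sub_eq_zero, mul_div_assoc', div_eq_one_iff_eq hx.ne', eq_comm]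
  rw [hfoc]
  constructor
  · intro hmax
    exact (hmax.isLocalMax (Ici_mem_nhds hx)).hasDerivAt_eq_zero (hasDerivAt_contestPayoff hb hx)
  · intro hzero
    have hcρ : 0 < c * ρ := mul_pos hc hρ0
    have hanti := strictAntiOn_winVariance_div hρ0 hρ1 hb
    have hcont := continuousOn_contestPayoff (c := c) hρ0.le hb
    have hderiv : ∀ z : ℝ, 0 < z →
        deriv (contestPayoff c ρ b) z = c * ρ * (winVariance ρ z b / z) - 1 :=
      fun z hz => (hasDerivAt_contestPayoff hb hz).deriv
    have hup : StrictMonoOn (contestPayoff c ρ b) (Icc 0 x) := by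
      refine strictMonoOn_of_deriv_pos (convex_Icc 0 x) (hcont.mono Icc_subset_Ici_self) ?_
      intro z hz
      rw [interior_Icc] at hz
      rw [hderiv z hz.1]
      have := mul_lt_mul_of_pos_left (hanti hz.1 (mem_Ioi.2 hx) hz.2) hcρ
      linarith
    have hdown : StrictAntiOn (contestPayoff c ρ b) (Ici x) := by
      refine strictAntiOn_of_deriv_neg (convex_Ici x) (hcont.mono (Ici_subset_Ici.2 hx.le)) ?_
      intro z hz
      rw [interior_Ici] at hz
      rw [hderiv z (hx.trans hz)]
      have := mul_lt_mul_of_pos_left (hanti (mem_Ioi.2 hx) (mem_Ioi.2 (hx.trans hz)) hz) hcρ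
      linarith
    intro z (hz : 0 ≤ z)
    rcases le_total z x with hzx | hxz
    · exact hup.monotoneOn ⟨hz, hzx⟩ ⟨hx.le, le_rfl⟩ hzx
    · exact hdown.antitoneOn self_mem_Ici hxz hxz

end contestPayoff

/-- `P (own stake) (opponent's stake)` is the payoff of a Penny Forfeit player who receives `hi`
on winning and `lo` on losing; the second player of the theorem has payoff `Function.swap Pm`. -/
def IsPennyPayoff (κ ρ hi lo : ℝ) (P : ℝ → ℝ → ℝ) : Prop :=
  (∀ a b : ℝ, ¬(a = 0 ∧ b = 0) →
    P a b = (κ * a ^ ρ / (a ^ ρ + b ^ ρ) + (1 - κ) / 2) * hi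
      + (κ * b ^ ρ / (a ^ ρ + b ^ ρ) + (1 - κ) / 2) * lo - a) ∧
  P 0 0 = (hi + lo) / 2

namespace IsPennyPayoff

variable {κ ρ hi lo : ℝ} {P : ℝ → ℝ → ℝ}

lemma eq_contestPayoff (hP : IsPennyPayoff κ ρ hi lo P) {x b : ℝ} (hx : 0 ≤ x) (hb : 0 < b) :
    P x b = contestPayoff (κ * (hi - lo)) ρ b x + (κ * lo + (1 - κ) * (hi + lo) / 2) := by
  have := rpow_nonneg hx ρ
  have := rpow_pos_of_pos hb ρ
  rw [hP.1 x b fun h => hb.ne' h.2, contestPayoff]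
  field_simp
  ring

lemma isMaxOn_iff (hP : IsPennyPayoff κ ρ hi lo P) (hκ : 0 < κ) (hlo : lo < hi) (hρ0 : 0 < ρ)
    (hρ1 : ρ ≤ 1) {a b : ℝ} (ha : 0 < a) (hb : 0 < b) :
    IsMaxOn (P · b) (Ici 0) a ↔ a = κ * ρ * (hi - lo) * winVariance ρ a b := by
  have hshift : IsMaxOn (P · b) (Ici 0) a ↔
      IsMaxOn (contestPayoff (κ * (hi - lo)) ρ b) (Ici 0) a := by
    simp only [_root_.isMaxOn_iff, mem_Ici]
    refine forall₂_congr fun x hx => ?_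
    rw [hP.eq_contestPayoff hx hb, hP.eq_contestPayoff ha.le hb, add_le_add_iff_right]
  rw [hshift, isMaxOn_contestPayoff_iff (mul_pos hκ (sub_pos.2 hlo)) hρ0 hρ1 hb ha,
    mul_right_comm κ]

lemma pos_of_isMaxOn (hP : IsPennyPayoff κ ρ hi lo P) (hκ : 0 < κ) (hlo : lo < hi)
    (hρ : 0 < ρ) {a b : ℝ} (ha : 0 ≤ a) (hb : 0 ≤ b) (hmax : IsMaxOn (P · b) (Ici 0) a) :
    0 < b := by
  have hpos : ∀ x : ℝ, 0 < x → P x 0 = (κ + (1 - κ) / 2) * hi + (1 - κ) / 2 * lo - x := by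
    intro x hx
    have := rpow_pos_of_pos hx ρ
    rw [hP.1 x 0 fun h => hx.ne' h.1, zero_rpow hρ.ne']
    field_simp
    ring
  refine hb.lt_of_ne' fun hb0 => ?_
  subst hb0
  rcases ha.eq_or_lt with rfl | ha
  · have hgain : 0 < κ * (hi - lo) := mul_pos hκ (sub_pos.2 hlo)
    have := _root_.isMaxOn_iff.1 hmax (κ * (hi - lo) / 4) (mem_Ici.2 (by positivity))
    rw [hpos _ (by positivity), hP.2] at this
    linarith
  · have := _root_.isMaxOn_iff.1 hmax (a / 2) (mem_Ici.2 (by positivity))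
    rw [hpos _ ha, hpos _ (half_pos ha)] at this
    linarith

end IsPennyPayoff

theorem foc_system_iff {c ρ M N a b : ℝ} (hM : 0 < M) (hN : 0 < N) (ha : 0 < a) :
    (a = c * M * winVariance ρ a b ∧ b = c * N * winVariance ρ b a) ↔
      (a = c * M * winVariance ρ M N ∧ b = c * N * winVariance ρ M N) := by
  have rescale : ∀ x y k : ℝ, 0 < k → x = M * k → y = N * k →
      winVariance ρ x y = winVariance ρ M N := by
    rintro x y k hk rfl rfl
    rw [mul_comm M, mul_comm N, winVariance_mul hM.le hN.le hk]
  rw [winVariance_comm ρ b a]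
  constructor
  · rintro ⟨hA, hB⟩
    have hk : 0 < c * winVariance ρ a b := pos_of_mul_pos_right (by linarith : 0 < M * _) hM.le
    have hV := rescale a b _ hk (by linear_combination hA) (by linear_combination hB)
    rw [hV] at hA hB
    exact ⟨hA, hB⟩
  · rintro ⟨hA, hB⟩
    have hk : 0 < c * winVariance ρ M N := pos_of_mul_pos_right (by linarith : 0 < M * _) hM.le
    rw [rescale a b _ hk (by linear_combination hA) (by linear_combination hB)]
    exact ⟨hA, hB⟩

theorem stmt18 (κ ρ : ℝ) (hκ : κ ∈ Set.Ioc (0:ℝ) 1) (hρ : ρ ∈ Set.Ioc (0:ℝ) 1)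
    (mneg mone nneg none' : ℝ) (hm : mneg < mone) (hn : none' < nneg)
    (Pp Pm : ℝ → ℝ → ℝ)
    (hPp : ∀ a b : ℝ, ¬(a = 0 ∧ b = 0) →
      Pp a b = (κ * a ^ ρ / (a ^ ρ + b ^ ρ) + (1 - κ) / 2) * mone
        + (κ * b ^ ρ / (a ^ ρ + b ^ ρ) + (1 - κ) / 2) * mneg - a)
    (hPp0 : Pp 0 0 = (mone + mneg) / 2)
    (hPm : ∀ a b : ℝ, ¬(a = 0 ∧ b = 0) →
      Pm a b = (κ * b ^ ρ / (a ^ ρ + b ^ ρ) + (1 - κ) / 2) * nneg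
        + (κ * a ^ ρ / (a ^ ρ + b ^ ρ) + (1 - κ) / 2) * none' - b)
    (hPm0 : Pm 0 0 = (nneg + none') / 2)
    (A B : ℝ)
    (hA : A = κ * ρ * (mone - mneg) ^ (1 + ρ) * (nneg - none') ^ ρ
      / ((mone - mneg) ^ ρ + (nneg - none') ^ ρ) ^ 2)
    (hB : B = κ * ρ * (mone - mneg) ^ ρ * (nneg - none') ^ (1 + ρ)
      / ((mone - mneg) ^ ρ + (nneg - none') ^ ρ) ^ 2) :
    (0 < A ∧ 0 < B) ∧
    (∀ a' : ℝ, 0 ≤ a' → Pp a' B ≤ Pp A B) ∧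
    (∀ b' : ℝ, 0 ≤ b' → Pm A b' ≤ Pm A B) ∧
    ∀ a b : ℝ, 0 ≤ a → 0 ≤ b →
      (∀ a' : ℝ, 0 ≤ a' → Pp a' b ≤ Pp a b) →
      (∀ b' : ℝ, 0 ≤ b' → Pm a b' ≤ Pm a b) →
      a = A ∧ b = B := by
  obtain ⟨hκ, -⟩ := hκ
  obtain ⟨hρ0, hρ1⟩ := hρ
  have hM : 0 < mone - mneg := sub_pos.2 hm
  have hN : 0 < nneg - none' := sub_pos.2 hn
  have hP : IsPennyPayoff κ ρ mone mneg Pp := ⟨hPp, hPp0⟩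
  have hQ : IsPennyPayoff κ ρ nneg none' (Function.swap Pm) :=
    ⟨fun a b h => by rw [Function.swap, hPm b a fun h' => h h'.symm, add_comm (b ^ ρ)], hPm0⟩
  have hApos : 0 < A := by rw [hA]; positivity
  have hBpos : 0 < B := by rw [hB]; positivity
  have hAB : A = κ * ρ * (mone - mneg) * winVariance ρ (mone - mneg) (nneg - none') ∧
      B = κ * ρ * (nneg - none') * winVariance ρ (mone - mneg) (nneg - none') := by
    rw [hA, hB, winVariance, rpow_add hM, rpow_add hN, rpow_one, rpow_one]
    constructor <;> ring
  have equilibrium_iff : ∀ a b : ℝ, 0 < a → 0 < b →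
      (IsMaxOn (Pp · b) (Ici 0) a ∧ IsMaxOn (Pm a ·) (Ici 0) b ↔ a = A ∧ b = B) := by
    intro a b ha hb
    rw [hP.isMaxOn_iff hκ hm hρ0 hρ1 ha hb, hQ.isMaxOn_iff hκ hn hρ0 hρ1 hb ha,
      foc_system_iff hM hN ha, ← hAB.1, ← hAB.2]
  obtain ⟨hmaxA, hmaxB⟩ := (equilibrium_iff A B hApos hBpos).2 ⟨rfl, rfl⟩
  refine ⟨⟨hApos, hBpos⟩, isMaxOn_iff.1 hmaxA, isMaxOn_iff.1 hmaxB, ?_⟩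
  intro a b ha hb h1 h2
  have hmax1 : IsMaxOn (Pp · b) (Ici 0) a := isMaxOn_iff.2 h1
  have hmax2 : IsMaxOn (Pm a ·) (Ici 0) b := isMaxOn_iff.2 h2
  exact (equilibrium_iff a b (hQ.pos_of_isMaxOn hκ hn hρ0 hb ha hmax2)
    (hP.pos_of_isMaxOn hκ hm hρ0 ha hb hmax1)).1 ⟨hmax1, hmax2⟩
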